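/- arXiv:1406.3140 — 3 statements merged into one kernel-verified Lean document; each statement's English description precedes it below -/
import Mathlib

section
/- Let F₁, …, F_{m+1} be pairwise disjoint faces (cubical subsets) of the n-cube, and for each i let p_i be a product distribution supported on F_i. Then every convex combination p = Σ_{i=1}^{m+1} α_i p_i (α_i ≥ 0, Σ_i α_i = 1) belongs to RBM_{n,m}. In other words, RBM_{n,m} contains any mixture of m+1 product distributions with disjoint cubical supports. -/
open scoped BigOperators

noncomputable section

/-- The real value of a Boolean. -/
def bval (b : Bool) : ℝ := if b then 1 else 0

/-- `p` is a probability distribution on the finite set `X`. -/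
def IsProb {X : Type*} [Fintype X] (p : X → ℝ) : Prop :=
  (∀ x, 0 ≤ p x) ∧ ∑ x, p x = 1

/-- One term of the Kullback-Leibler divergence (base-2 logarithm); terms with `a = 0` are `0`. -/
noncomputable def klTerm (a b : ℝ) : ℝ := if a = 0 then 0 else a * Real.logb 2 (a / b)

/-- Kullback-Leibler divergence with base-2 logarithm; it is `⊤ = ∞` if the support of `q`
does not contain the support of `p`. -/
noncomputable def KL {X : Type*} [Fintype X] (p q : X → ℝ) : EReal :=
  if ∀ x, p x ≠ 0 → q x ≠ 0 then ((∑ x, klTerm (p x) (q x) : ℝ) : EReal) else ⊤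

/-- The divergence from `p` to a set `M` of distributions: `inf_{q ∈ M} D(p‖q)`. -/
noncomputable def KLset {X : Type*} [Fintype X] (p : X → ℝ) (M : Set (X → ℝ)) : EReal :=
  ⨅ q ∈ M, KL p q

/-- The visible distribution `p_{W,C,B}` of an RBM with `n` visible and `m` hidden units. -/
noncomputable def rbmDist (n m : ℕ) (W : Matrix (Fin m) (Fin n) ℝ) (C : Fin m → ℝ)
    (B : Fin n → ℝ) : (Fin n → Bool) → ℝ := fun v =>
  (∑ h : Fin m → Bool,
      Real.exp ((∑ j, ∑ i, bval (h j) * W j i * bval (v i)) +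
        (∑ j, C j * bval (h j)) + (∑ i, B i * bval (v i)))) /
  (∑ v' : Fin n → Bool, ∑ h : Fin m → Bool,
      Real.exp ((∑ j, ∑ i, bval (h j) * W j i * bval (v' i)) +
        (∑ j, C j * bval (h j)) + (∑ i, B i * bval (v' i))))

/-- The RBM model `RBM_{n,m}`: the closure (in `ℝ^{{0,1}^n}`) of the set of visible
distributions representable with some choice of the parameters. -/
noncomputable def RBM (n m : ℕ) : Set ((Fin n → Bool) → ℝ) :=
  closure { p | ∃ (W : Matrix (Fin m) (Fin n) ℝ) (C : Fin m → ℝ) (B : Fin n → ℝ),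
    p = rbmDist n m W C B }

/-- `p` is a product distribution on `{0,1}^n`. -/
def IsProductDist {n : ℕ} (p : (Fin n → Bool) → ℝ) : Prop :=
  ∃ f : Fin n → Bool → ℝ, (∀ i, IsProb (f i)) ∧ ∀ v, p v = ∏ i, f i (v i)

/-- A face (cubical subset) of the `n`-cube: the coordinates outside `I` are fixed to `u`. -/
def IsFace {n : ℕ} (F : Set (Fin n → Bool)) : Prop :=
  ∃ (I : Finset (Fin n)) (u : Fin n → Bool), F = {x | ∀ i ∉ I, x i = u i}

/-- An edge of the `n`-cube: a pair of vectors differing in exactly one entry. -/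
def IsEdge {n : ℕ} (E : Set (Fin n → Bool)) : Prop :=
  ∃ (x : Fin n → Bool) (i : Fin n), E = {x, Function.update x i (!x i)}

/-!
Summing out the hidden units shows that the RBM distributions are exactly the normalizations of
`exp ℓ₀ * ∏ⱼ (1 + exp ℓⱼ)` with `ℓ₀, ℓⱼ` affine in the visible bits. Each weighted component
`αᵢ pᵢ(v) = αᵢ ∏ₖ fᵢₖ(vₖ)` is a product of `n + 1` factors, hence the limit of `exp gᵢ` with
`gᵢ` affine, where the logarithm of every vanishing factor is replaced by a penalty `-t`,
`t → ∞`. Use the last component as base, `ℓ₀ = g_last`, and let the `j`-th hidden unit carry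
`ℓⱼ = gⱼ - g_last`; the product then expands to `Σᵢ αᵢ pᵢ` plus cross terms. The other components
are penalized at rate `(n + 2) t` while the base loses at most `(n + 1) t`, so `ℓⱼ → -∞` wherever
`pⱼ` vanishes. As the supports are disjoint, at most one `exp ℓⱼ` survives at each `v`, and all
cross terms disappear in the limit.
-/

open Filter Topology Real

def normalizeDist {X : Type*} [Fintype X] (φ : X → ℝ) : X → ℝ := fun x => φ x / ∑ y, φ y

section Normalize

variable {X : Type*} [Fintype X]

lemma normalizeDist_const_mul {c : ℝ} (hc : c ≠ 0) (φ : X → ℝ) :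
    normalizeDist (fun x => c * φ x) = normalizeDist φ := by
  funext x
  simp only [normalizeDist, ← Finset.mul_sum]
  exact mul_div_mul_left _ _ hc

lemma normalizeDist_eq_self {φ : X → ℝ} (h : ∑ x, φ x = 1) : normalizeDist φ = φ := by
  funext x
  simp [normalizeDist, h]

lemma tendsto_normalizeDist {α : Type*} {l : Filter α} {φ : α → X → ℝ} {ψ : X → ℝ}
    (h : ∀ x, Tendsto (fun s => φ s x) l (𝓝 (ψ x))) (hψ : ∑ x, ψ x ≠ 0) :
    Tendsto (fun s => normalizeDist (φ s)) l (𝓝 (normalizeDist ψ)) :=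
  tendsto_pi_nhds.mpr fun x => (h x).div (tendsto_finsetSum _ fun y _ => h y) hψ

end Normalize

lemma sum_exp_bval_mul (a : ℝ) : ∑ b : Bool, exp (bval b * a) = 1 + exp a := by
  simp [bval, add_comm]

theorem rbmDist_eq_normalizeDist (n m : ℕ) (W : Matrix (Fin m) (Fin n) ℝ) (C : Fin m → ℝ)
    (B : Fin n → ℝ) :
    rbmDist n m W C B = normalizeDist fun v =>
      exp (∑ i, B i * bval (v i)) * ∏ j, (1 + exp (∑ i, W j i * bval (v i) + C j)) := by
  have marginal : ∀ v : Fin n → Bool,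
      ∑ h : Fin m → Bool, exp ((∑ j, ∑ i, bval (h j) * W j i * bval (v i)) +
        (∑ j, C j * bval (h j)) + (∑ i, B i * bval (v i))) =
      exp (∑ i, B i * bval (v i)) * ∏ j, (1 + exp (∑ i, W j i * bval (v i) + C j)) := by
    intro v
    simp only [← sum_exp_bval_mul, Fintype.prod_sum, Finset.mul_sum, ← exp_sum, ← exp_add]
    refine Finset.sum_congr rfl fun h _ => congrArg exp ?_
    simp only [mul_add, Finset.mul_sum, ← Finset.sum_add_distrib]
    rw [add_comm]
    congr 1
    refine Finset.sum_congr rfl fun j _ => ?_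
    simp only [mul_assoc, mul_comm (C j)]
  funext v
  simp only [rbmDist, normalizeDist, marginal]

def IsAffine {n : ℕ} (ℓ : (Fin n → Bool) → ℝ) : Prop :=
  ∃ (c : ℝ) (w : Fin n → ℝ), ∀ v, ℓ v = c + ∑ k, w k * bval (v k)

section Affine

variable {n : ℕ}

lemma isAffine_const_add_sum (c : ℝ) (L : Fin n → Bool → ℝ) :
    IsAffine fun v => c + ∑ k, L k (v k) := by
  refine ⟨c + ∑ k, L k false, fun k => L k true - L k false, fun v => ?_⟩
  simp only [add_assoc, ← Finset.sum_add_distrib]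
  congr 1
  refine Finset.sum_congr rfl fun k _ => ?_
  cases v k <;> simp [bval]

lemma IsAffine.sub {ℓ₁ ℓ₂ : (Fin n → Bool) → ℝ} (h₁ : IsAffine ℓ₁) (h₂ : IsAffine ℓ₂) :
    IsAffine fun v => ℓ₁ v - ℓ₂ v := by
  obtain ⟨c₁, w₁, h₁⟩ := h₁
  obtain ⟨c₂, w₂, h₂⟩ := h₂
  refine ⟨c₁ - c₂, w₁ - w₂, fun v => ?_⟩
  simp only [h₁, h₂, Pi.sub_apply, sub_mul, Finset.sum_sub_distrib]
  ring

end Affine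

theorem exists_normalizeDist_eq_rbmDist {n m : ℕ} {ℓ₀ : (Fin n → Bool) → ℝ}
    {ℓ : Fin m → (Fin n → Bool) → ℝ} (h₀ : IsAffine ℓ₀) (h : ∀ j, IsAffine (ℓ j)) :
    ∃ W C B, normalizeDist (fun v => exp (ℓ₀ v) * ∏ j, (1 + exp (ℓ j v))) = rbmDist n m W C B := by
  obtain ⟨c₀, B, hB⟩ := h₀
  choose C W hW using h
  refine ⟨Matrix.of W, C, B, ?_⟩
  rw [rbmDist_eq_normalizeDist]
  conv_rhs => rw [← normalizeDist_const_mul (exp_ne_zero c₀)]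
  congr 1
  funext v
  simp only [hB, hW, Matrix.of_apply, exp_add, add_comm (C _)]
  ring

lemma tendsto_exp_mul_prod_one_add_exp_sub {α ι : Type*} [Fintype ι] [DecidableEq ι]
    {l : Filter α} [l.NeBot] {x : α → ℝ} {y : ι → α → ℝ} {a : ℝ} {b : ι → ℝ}
    (hx : Tendsto (fun s => exp (x s)) l (𝓝 a))
    (hy : ∀ j, Tendsto (fun s => exp (y j s)) l (𝓝 (b j)))
    (hsep : ∀ j j', j ≠ j' →
      Tendsto (fun s => y j s - x s) l atBot ∨ Tendsto (fun s => y j' s - x s) l atBot) :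
    Tendsto (fun s => exp (x s) * ∏ j, (1 + exp (y j s - x s))) l (𝓝 (a + ∑ j, b j)) := by
  have hb : ∀ j, Tendsto (fun s => y j s - x s) l atBot → b j = 0 := fun j hj =>
    tendsto_nhds_unique (hy j) (by
      simpa [← exp_add] using hx.mul (tendsto_exp_atBot.comp hj))
  have hone : ∀ j, Tendsto (fun s => y j s - x s) l atBot →
      Tendsto (fun s => 1 + exp (y j s - x s)) l (𝓝 1) := fun j hj => by
    simpa using tendsto_const_nhds.add (tendsto_exp_atBot.comp hj)
  by_cases hall : ∀ j, Tendsto (fun s => y j s - x s) l atBot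
  · simpa [hb _ (hall _)] using hx.mul (tendsto_finsetProd _ fun j _ => hone j (hall j))
  push Not at hall
  obtain ⟨j₀, hj₀⟩ := hall
  have hother : ∀ j ∈ Finset.univ.erase j₀, Tendsto (fun s => y j s - x s) l atBot :=
    fun j hj => (hsep j j₀ (Finset.ne_of_mem_erase hj)).resolve_right hj₀
  have hsplit : ∀ s, exp (x s) * ∏ j, (1 + exp (y j s - x s)) =
      (exp (x s) + exp (y j₀ s)) * ∏ j ∈ Finset.univ.erase j₀, (1 + exp (y j s - x s)) := by
    intro s
    rw [← Finset.mul_prod_erase _ _ (Finset.mem_univ j₀), ← mul_assoc, mul_add, mul_one,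
      ← exp_add, add_sub_cancel]
  have hlimit : a + ∑ j, b j = (a + b j₀) * ∏ j ∈ Finset.univ.erase j₀, 1 := by
    rw [Finset.prod_const_one, mul_one, ← Finset.add_sum_erase _ _ (Finset.mem_univ j₀),
      Finset.sum_eq_zero fun j hj => hb j (hother j hj), add_zero]
  simp only [hsplit, hlimit]
  exact (hx.add (hy j₀)).mul (tendsto_finsetProd _ fun j hj => hone j (hother j hj))

-- As `Real.log 0 = 0`, `exp (penalizedLog t 0) = exp (-t)`, while `exp (penalizedLog t x) = x`
-- for `x > 0`.
def penalizedLog (t x : ℝ) : ℝ := log x - if x = 0 then t else 0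

section PenalizedLog

variable {α κ : Type*} [Fintype κ]

lemma tendsto_exp_penalizedLog {l : Filter α} {t : α → ℝ} (ht : Tendsto t l atTop) {x : ℝ}
    (hx : 0 ≤ x) : Tendsto (fun s => exp (penalizedLog (t s) x)) l (𝓝 x) := by
  rcases hx.eq_or_lt with rfl | hx
  · simp only [penalizedLog, log_zero, if_true, zero_sub]
    exact tendsto_exp_atBot.comp (tendsto_neg_atTop_atBot.comp ht)
  · simpa [penalizedLog, hx.ne', exp_log hx] using tendsto_const_nhds

lemma tendsto_exp_sum_penalizedLog {l : Filter α} {t : α → ℝ} (ht : Tendsto t l atTop)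
    {x : κ → ℝ} (hx : ∀ o, 0 ≤ x o) :
    Tendsto (fun s => exp (∑ o, penalizedLog (t s) (x o))) l (𝓝 (∏ o, x o)) := by
  simpa only [exp_sum] using tendsto_finsetProd _ fun o _ => tendsto_exp_penalizedLog ht (hx o)

lemma sum_penalizedLog_le {t : ℝ} (ht : 0 ≤ t) {x : κ → ℝ} (hx : ∏ o, x o = 0) :
    ∑ o, penalizedLog t (x o) ≤ ∑ o, log (x o) - t := by
  obtain ⟨o, -, ho⟩ := Finset.prod_eq_zero_iff.mp hx
  simp only [penalizedLog, Finset.sum_sub_distrib]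
  gcongr
  calc t = if x o = 0 then t else 0 := by simp [ho]
    _ ≤ ∑ o, if x o = 0 then t else 0 :=
      Finset.single_le_sum (f := fun o => if x o = 0 then t else 0)
        (fun o _ => ite_nonneg ht le_rfl) (Finset.mem_univ o)

lemma le_sum_penalizedLog {t : ℝ} (ht : 0 ≤ t) (x : κ → ℝ) :
    ∑ o, log (x o) - Fintype.card κ * t ≤ ∑ o, penalizedLog t (x o) := by
  simp only [penalizedLog, Finset.sum_sub_distrib]
  gcongr
  calc ∑ o, (if x o = 0 then t else 0) ≤ Finset.univ.card • t :=
        Finset.sum_le_card_nsmul _ _ _ fun o _ => by split_ifs <;> simp [ht]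
    _ = Fintype.card κ * t := by rw [Finset.card_univ, nsmul_eq_mul]

lemma tendsto_sum_penalizedLog_sub_atBot {x y : κ → ℝ} (hx : ∏ o, x o = 0) :
    Tendsto (fun s => ∑ o, penalizedLog ((Fintype.card κ + 1) * s) (x o) -
      ∑ o, penalizedLog s (y o)) atTop atBot := by
  refine tendsto_atBot_mono' _ ?_ (tendsto_atBot_add_const_left atTop
    (∑ o, log (x o) - ∑ o, log (y o)) tendsto_neg_atTop_atBot)
  filter_upwards [eventually_ge_atTop 0] with s hs
  have hupper := sum_penalizedLog_le (by positivity : 0 ≤ (Fintype.card κ + 1) * s) hx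
  have hlower := le_sum_penalizedLog hs y
  linarith

end PenalizedLog

lemma sum_prod_eq_one {ι κ : Type*} [Fintype ι] [DecidableEq ι] [Fintype κ] {f : ι → κ → ℝ}
    (hf : ∀ i, ∑ b, f i b = 1) : ∑ v : ι → κ, ∏ i, f i (v i) = 1 := by
  rw [← Fintype.prod_sum]
  exact Finset.prod_eq_one fun i _ => hf i

def weightedFactors {n : ℕ} (a : ℝ) (f : Fin n → Bool → ℝ) (v : Fin n → Bool) :
    Option (Fin n) → ℝ
  | none => a
  | some k => f k (v k)

section WeightedFactors

variable {n : ℕ} (a : ℝ) (f : Fin n → Bool → ℝ)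

lemma prod_weightedFactors (v : Fin n → Bool) :
    ∏ o, weightedFactors a f v o = a * ∏ k, f k (v k) :=
  Fintype.prod_option _

lemma isAffine_sum_weightedFactors (g : ℝ → ℝ) :
    IsAffine fun v => ∑ o, g (weightedFactors a f v o) := by
  simpa only [Fintype.sum_option, weightedFactors] using
    isAffine_const_add_sum (g a) fun k b => g (f k b)

end WeightedFactors

theorem mixture_of_products_mem_rbm (n m : ℕ) (f : Fin (m + 1) → Fin n → Bool → ℝ)
    (hf : ∀ i k, IsProb (f i k))
    (hdisj : ∀ i j (v : Fin n → Bool), i ≠ j → ∏ k, f i k (v k) = 0 ∨ ∏ k, f j k (v k) = 0)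
    (α : Fin (m + 1) → ℝ) (hα : ∀ i, 0 ≤ α i) (hsum : ∑ i, α i = 1) :
    (fun v => ∑ i, α i * ∏ k, f i k (v k)) ∈ RBM n m := by
  let x : Fin (m + 1) → (Fin n → Bool) → Option (Fin n) → ℝ :=
    fun i => weightedFactors (α i) (f i)
  have hx_nonneg : ∀ i v o, 0 ≤ x i v o := by
    rintro i v (_ | k)
    exacts [hα i, (hf i k).1 _]
  let ℓ₀ : ℝ → (Fin n → Bool) → ℝ := fun s v => ∑ o, penalizedLog s (x (Fin.last m) v o)
  let ℓ : Fin m → ℝ → (Fin n → Bool) → ℝ := fun j s v =>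
    ∑ o, penalizedLog ((Fintype.card (Option (Fin n)) + 1) * s) (x j.castSucc v o)
  let φ : ℝ → (Fin n → Bool) → ℝ := fun s v =>
    exp (ℓ₀ s v) * ∏ j, (1 + exp (ℓ j s v - ℓ₀ s v))
  have hmem : ∀ s, normalizeDist (φ s) ∈ {p | ∃ W C B, p = rbmDist n m W C B} := fun s =>
    exists_normalizeDist_eq_rbmDist (isAffine_sum_weightedFactors _ _ _)
      fun j => (isAffine_sum_weightedFactors _ _ _).sub (isAffine_sum_weightedFactors _ _ _)
  have hlim : ∀ v, Tendsto (fun s => φ s v) atTop (𝓝 (∑ i, α i * ∏ k, f i k (v k))) := by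
    intro v
    rw [Fin.sum_univ_castSucc, add_comm]
    refine tendsto_exp_mul_prod_one_add_exp_sub ?_ (fun j => ?_) fun j j' hjj' => ?_
    · rw [← prod_weightedFactors]
      exact tendsto_exp_sum_penalizedLog tendsto_id (hx_nonneg _ v)
    · rw [← prod_weightedFactors]
      exact tendsto_exp_sum_penalizedLog (tendsto_id.const_mul_atTop (by positivity))
        (hx_nonneg _ v)
    · refine (hdisj _ _ v (Fin.castSucc_injective m |>.ne hjj')).imp (fun h => ?_) fun h => ?_ <;>
      exact tendsto_sum_penalizedLog_sub_atBot (by rw [prod_weightedFactors, h, mul_zero])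
  have htotal : ∑ v : Fin n → Bool, ∑ i, α i * ∏ k, f i k (v k) = 1 := by
    rw [Finset.sum_comm]
    simp only [← Finset.mul_sum, sum_prod_eq_one fun k => (hf _ k).2, mul_one, hsum]
  rw [← normalizeDist_eq_self htotal]
  exact mem_closure_of_tendsto (tendsto_normalizeDist hlim (htotal ▸ one_ne_zero))
    (Eventually.of_forall hmem)

theorem mixture_disjoint_products_mem_rbm_general (n m : ℕ)
    (F : Fin (m + 1) → Set (Fin n → Bool))
    (hdisj : ∀ i j, i ≠ j → Disjoint (F i) (F j))
    (p : Fin (m + 1) → (Fin n → Bool) → ℝ)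
    (hp : ∀ i, IsProb (p i) ∧ IsProductDist (p i) ∧ ∀ x, x ∉ F i → p i x = 0)
    (α : Fin (m + 1) → ℝ) (hα : ∀ i, 0 ≤ α i) (hsum : ∑ i, α i = 1) :
    (fun v => ∑ i, α i * p i v) ∈ RBM n m := by
  choose f hf hpf using fun i => (hp i).2.1
  have hp_eq : p = fun i (v : Fin n → Bool) => ∏ k, f i k (v k) := funext fun i => funext (hpf i)
  subst hp_eq
  refine mixture_of_products_mem_rbm n m f hf (fun i j v hij => ?_) α hα hsum
  by_contra! hv
  exact Set.disjoint_left.mp (hdisj i j hij) (not_imp_comm.mp ((hp i).2.2 v) hv.1)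
    (not_imp_comm.mp ((hp j).2.2 v) hv.2)

/-- Any mixture of `m+1` product distributions supported on pairwise disjoint
faces (cubical subsets) of the `n`-cube belongs to `RBM_{n,m}`. -/
theorem mixture_disjoint_products_mem_rbm (n m : ℕ)
    (F : Fin (m + 1) → Set (Fin n → Bool)) (hF : ∀ i, IsFace (F i))
    (hdisj : ∀ i j, i ≠ j → Disjoint (F i) (F j))
    (p : Fin (m + 1) → (Fin n → Bool) → ℝ)
    (hp : ∀ i, IsProb (p i) ∧ IsProductDist (p i) ∧ ∀ x, x ∉ F i → p i x = 0)
    (α : Fin (m + 1) → ℝ) (hα : ∀ i, 0 ≤ α i) (hsum : ∑ i, α i = 1) :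
    (fun v => ∑ i, α i * p i v) ∈ RBM n m :=
  mixture_disjoint_products_mem_rbm_general n m F hdisj p hp α hα hsum
end
end

section
/- Every probability distribution on {0,1}^n whose support has cardinality at most m+1 belongs to RBM_{n,m}. -/
open scoped BigOperators

noncomputable section

/-!
Fix a point `v₀` of the support and give each of the other (at most `m`) support points `x` its
own hidden unit, with preactivation `t (d(v₀, x) - (n + 1) d(x, v)) + log (p x / p v₀)` at `v`,
where `d` is the Hamming distance; the remaining units get the constant preactivation `-t`, and
the visible bias is `t (2 v₀ - 1)`. Summing out the hidden units, the weight of `v` is, up to a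
factor independent of `v`, `exp (-t d(v₀, v))` times the product of the `1 + exp (preactivation)`.
As `t → ∞`, a unit at `x ≠ v` has preactivation at most `-t + log (p x / p v₀)` and its factor
tends to `1`, while the unit at `v` contributes `exp (-t d(v₀, v)) + p v / p v₀` together with
the visible term, and `exp (-t d(v₀, v)) → 0` for `v ≠ v₀`. So the weights, rescaled by a factor
independent of `v`, tend to `p`.
-/

open Filter Topology Real

variable {n m : ℕ}

theorem sum_sign_mul_bval (x v : Fin n → Bool) :
    ∑ i, (2 * bval (x i) - 1) * bval (v i) = ∑ i, bval (x i) - hammingDist x v := by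
  rw [hammingDist, Finset.card_filter, Nat.cast_sum, ← Finset.sum_sub_distrib]
  refine Finset.sum_congr rfl fun i _ => ?_
  cases x i <;> cases v i <;> norm_num [bval]

def rbmWeight (W : Matrix (Fin m) (Fin n) ℝ) (C : Fin m → ℝ) (B : Fin n → ℝ)
    (v : Fin n → Bool) : ℝ :=
  exp (∑ i, B i * bval (v i)) * ∏ j, (1 + exp (∑ i, W j i * bval (v i) + C j))

theorem sum_exp_hidden (c : Fin m → ℝ) :
    ∑ h : Fin m → Bool, exp (∑ j, bval (h j) * c j) = ∏ j, (1 + exp (c j)) := by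
  simp_rw [exp_sum]
  rw [← Fintype.prod_sum fun j (b : Bool) => exp (bval b * c j)]
  refine Finset.prod_congr rfl fun j _ => ?_
  simp [bval, add_comm]

theorem sum_hidden_eq_rbmWeight (W : Matrix (Fin m) (Fin n) ℝ) (C : Fin m → ℝ) (B : Fin n → ℝ)
    (v : Fin n → Bool) :
    ∑ h : Fin m → Bool, exp ((∑ j, ∑ i, bval (h j) * W j i * bval (v i)) +
        (∑ j, C j * bval (h j)) + (∑ i, B i * bval (v i))) = rbmWeight W C B v := by
  have hsplit : ∀ h : Fin m → Bool,
      (∑ j, ∑ i, bval (h j) * W j i * bval (v i)) + ∑ j, C j * bval (h j) =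
        ∑ j, bval (h j) * (∑ i, W j i * bval (v i) + C j) := fun h => by
    simp only [mul_add, Finset.mul_sum, ← Finset.sum_add_distrib, mul_assoc, mul_comm (C _)]
  simp_rw [hsplit, exp_add, ← Finset.sum_mul, sum_exp_hidden]
  exact mul_comm _ _

theorem rbmDist_eq_div (W : Matrix (Fin m) (Fin n) ℝ) (C : Fin m → ℝ) (B : Fin n → ℝ)
    (v : Fin n → Bool) :
    rbmDist n m W C B v = rbmWeight W C B v / ∑ v', rbmWeight W C B v' := by
  simp only [rbmDist, sum_hidden_eq_rbmWeight]

theorem tendsto_div_sum_of_tendsto_mul {ι X : Type*} [Fintype X] {l : Filter ι}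
    {G : ι → X → ℝ} {c : ι → ℝ} {q : X → ℝ} (hc : ∀ k, c k ≠ 0)
    (hG : ∀ x, Tendsto (fun k => c k * G k x) l (𝓝 (q x))) (hq : ∑ x, q x = 1) :
    Tendsto (fun k x => G k x / ∑ y, G k y) l (𝓝 q) := by
  refine tendsto_pi_nhds.2 fun x => ?_
  have hsum : Tendsto (fun k => ∑ y, c k * G k y) l (𝓝 1) :=
    hq ▸ tendsto_finsetSum _ fun y _ => hG y
  refine (div_one (q x) ▸ (hG x).div hsum one_ne_zero).congr fun k => ?_
  rw [Pi.div_apply, ← Finset.mul_sum, mul_div_mul_left _ _ (hc k)]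

theorem tendsto_exp_neg_mul_hammingDist {v₀ v : Fin n → Bool} (hv : v ≠ v₀) :
    Tendsto (fun t : ℝ => exp (-(t * hammingDist v₀ v))) atTop (𝓝 0) := by
  have hd : (0 : ℝ) < hammingDist v₀ v := by exact_mod_cast hammingDist_pos.2 hv.symm
  exact tendsto_exp_atBot.comp <| tendsto_neg_atTop_atBot.comp <|
    tendsto_id.atTop_mul_const hd

theorem exists_fin_option_enum_of_card_le {α : Type*} (S : Finset α) (hS : S.card ≤ m) :
    ∃ σ : Fin m → Option α, (∀ j x, σ j = some x → x ∈ S) ∧ ∀ x ∈ S, ∃! j, σ j = some x := by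
  obtain ⟨f⟩ := Function.Embedding.nonempty_of_card_le (α := S) (β := Fin m) (by simpa using hS)
  have hσ_iff : ∀ j x,
      (Function.partialInv f j).map Subtype.val = some x ↔ ∃ y : S, f y = j ∧ ↑y = x :=
    fun j x => by simp only [Option.map_eq_some_iff, f.injective.isPartialInv _ _]
  refine ⟨fun j => (Function.partialInv f j).map Subtype.val, fun j x hx => ?_, fun x hx => ?_⟩
  · obtain ⟨y, -, rfl⟩ := (hσ_iff j x).1 hx
    exact y.2
  · refine ⟨f ⟨x, hx⟩, (hσ_iff _ x).2 ⟨_, rfl, rfl⟩, fun j hj => ?_⟩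
    obtain ⟨y, rfl, rfl⟩ := (hσ_iff j x).1 hj
    rfl

section Construction

/- Hidden unit `j` is tuned to the visible state `x` when `σ j = some x`, and is switched off
when `σ j = none`. -/
variable (p : (Fin n → Bool) → ℝ) (v₀ : Fin n → Bool) (σ : Fin m → Option (Fin n → Bool))

def hiddenWeight (t : ℝ) : Matrix (Fin m) (Fin n) ℝ := fun j i =>
  (σ j).elim 0 fun x => t * (n + 1) * (2 * bval (x i) - 1)

def hiddenBias (t : ℝ) : Fin m → ℝ := fun j =>
  (σ j).elim (-t) fun x =>
    t * hammingDist v₀ x + log (p x / p v₀) - t * (n + 1) * ∑ i, bval (x i)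

def visibleBias (t : ℝ) : Fin n → ℝ := fun i => t * (2 * bval (v₀ i) - 1)

def hiddenFactor (t : ℝ) (j : Fin m) (v : Fin n → Bool) : ℝ :=
  1 + exp ((σ j).elim (-t) fun x =>
    t * hammingDist v₀ x + log (p x / p v₀) - t * (n + 1) * hammingDist x v)

theorem rbmWeight_eq_exp_mul_prod_hiddenFactor (t : ℝ) (v : Fin n → Bool) :
    rbmWeight (hiddenWeight σ t) (hiddenBias p v₀ σ t) (visibleBias v₀ t) v =
      exp (t * ∑ i, bval (v₀ i)) *
        (exp (-(t * hammingDist v₀ v)) * ∏ j, hiddenFactor p v₀ σ t j v) := by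
  have hvisible : ∑ i, visibleBias v₀ t i * bval (v i) =
      t * ∑ i, bval (v₀ i) + -(t * hammingDist v₀ v) := by
    simp only [visibleBias, mul_assoc, ← Finset.mul_sum, sum_sign_mul_bval]
    ring
  have hhidden : ∀ j, 1 + exp (∑ i, hiddenWeight σ t j i * bval (v i) + hiddenBias p v₀ σ t j) =
      hiddenFactor p v₀ σ t j v := fun j => by
    cases hj : σ j with
    | none => simp [hiddenWeight, hiddenBias, hiddenFactor, hj]
    | some x =>
      simp only [hiddenWeight, hiddenBias, hiddenFactor, hj, Option.elim, mul_assoc,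
        ← Finset.mul_sum, sum_sign_mul_bval]
      ring_nf
  simp only [rbmWeight, hhidden, hvisible]
  rw [exp_add, mul_assoc]

theorem tendsto_hiddenFactor {j : Fin m} {v : Fin n → Bool} (h : σ j ≠ some v) :
    Tendsto (fun t => hiddenFactor p v₀ σ t j v) atTop (𝓝 1) := by
  suffices hbot : Tendsto (fun t : ℝ => (σ j).elim (-t) fun x =>
      t * hammingDist v₀ x + log (p x / p v₀) - t * (n + 1) * hammingDist x v) atTop atBot by
    have hlim := (tendsto_exp_atBot.comp hbot).const_add 1
    rw [add_zero] at hlim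
    exact hlim
  cases hj : σ j with
  | none => simpa using tendsto_neg_atTop_atBot
  | some x =>
    have hd₀ : (hammingDist v₀ x : ℝ) ≤ n := by
      exact_mod_cast hammingDist_le_card_fintype.trans_eq (Fintype.card_fin n)
    have hd : (1 : ℝ) ≤ hammingDist x v := by
      exact_mod_cast hammingDist_pos.2 fun hxv : x = v => h (hxv ▸ hj)
    refine tendsto_atBot_mono' atTop ?_
      (tendsto_atBot_add_const_right _ (log (p x / p v₀)) tendsto_neg_atTop_atBot)
    filter_upwards [eventually_ge_atTop 0] with t ht
    simp only [Option.elim]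
    nlinarith [mul_le_mul_of_nonneg_left hd₀ ht,
      mul_le_mul_of_nonneg_left hd (by positivity : (0 : ℝ) ≤ t * (n + 1))]

theorem exp_mul_hiddenFactor_of_eq_some {j : Fin m} {v : Fin n → Bool} (h : σ j = some v)
    (hr : 0 < p v / p v₀) (t : ℝ) :
    exp (-(t * hammingDist v₀ v)) * hiddenFactor p v₀ σ t j v =
      exp (-(t * hammingDist v₀ v)) + p v / p v₀ := by
  rw [hiddenFactor, h, Option.elim, hammingDist_self, Nat.cast_zero, mul_zero, sub_zero,
    exp_add, exp_log hr, mul_add, mul_one, ← mul_assoc, ← exp_add, neg_add_cancel, exp_zero,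
    one_mul]

variable {p v₀ σ}

theorem tendsto_rescaled_rbmWeight (hp : ∀ x, 0 ≤ p x) (hv₀ : p v₀ ≠ 0)
    (hσsupp : ∀ j x, σ j = some x → x ≠ v₀ ∧ p x ≠ 0)
    (hσuniq : ∀ x, x ≠ v₀ → p x ≠ 0 → ∃! j, σ j = some x) (v : Fin n → Bool) :
    Tendsto (fun t => p v₀ * (exp (-(t * hammingDist v₀ v)) * ∏ j, hiddenFactor p v₀ σ t j v))
      atTop (𝓝 (p v)) := by
  by_cases hv : ∃ j₀, σ j₀ = some v
  · obtain ⟨j₀, hj₀⟩ := hv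
    obtain ⟨hvv₀, hpv⟩ := hσsupp j₀ v hj₀
    have hr : 0 < p v / p v₀ :=
      div_pos ((hp v).lt_of_ne' hpv) ((hp v₀).lt_of_ne' hv₀)
    have hothers : Tendsto (fun t => ∏ j ∈ Finset.univ.erase j₀, hiddenFactor p v₀ σ t j v)
        atTop (𝓝 1) := by
      simpa using tendsto_finsetProd _ fun j hj => tendsto_hiddenFactor p v₀ σ fun hjv =>
        (Finset.mem_erase.1 hj).1 ((hσuniq v hvv₀ hpv).unique hjv hj₀)
    have hlim := (((tendsto_exp_neg_mul_hammingDist hvv₀).add_const (p v / p v₀)).const_mul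
      (p v₀)).mul hothers
    rw [zero_add, mul_one, mul_div_cancel₀ _ hv₀] at hlim
    refine hlim.congr fun t => ?_
    rw [← Finset.mul_prod_erase _ _ (Finset.mem_univ j₀),
      ← exp_mul_hiddenFactor_of_eq_some p v₀ σ hj₀ hr]
    ring
  · push Not at hv
    have hprod : Tendsto (fun t => ∏ j, hiddenFactor p v₀ σ t j v) atTop (𝓝 1) := by
      simpa using tendsto_finsetProd _ fun j _ => tendsto_hiddenFactor p v₀ σ (hv j)
    by_cases hvv₀ : v = v₀
    · subst hvv₀
      simpa using hprod.const_mul (p v)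
    · have hpv : p v = 0 := by
        by_contra hpv
        obtain ⟨j, hj, -⟩ := hσuniq v hvv₀ hpv
        exact hv j hj
      simpa [hpv] using ((tendsto_exp_neg_mul_hammingDist hvv₀).mul hprod).const_mul (p v₀)

theorem tendsto_rbmDist (hp : IsProb p) (hv₀ : p v₀ ≠ 0)
    (hσsupp : ∀ j x, σ j = some x → x ≠ v₀ ∧ p x ≠ 0)
    (hσuniq : ∀ x, x ≠ v₀ → p x ≠ 0 → ∃! j, σ j = some x) :
    Tendsto (fun t => rbmDist n m (hiddenWeight σ t) (hiddenBias p v₀ σ t) (visibleBias v₀ t))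
      atTop (𝓝 p) := by
  simp_rw [funext (rbmDist_eq_div _ _ _)]
  refine tendsto_div_sum_of_tendsto_mul (c := fun t => p v₀ * exp (-(t * ∑ i, bval (v₀ i))))
    (fun t => mul_ne_zero hv₀ (exp_ne_zero _)) (fun v => ?_) hp.2
  refine (tendsto_rescaled_rbmWeight hp.1 hv₀ hσsupp hσuniq v).congr fun t => ?_
  rw [rbmWeight_eq_exp_mul_prod_hiddenFactor, mul_assoc, ← mul_assoc (exp _), ← exp_add,
    neg_add_cancel, exp_zero, one_mul]

end Construction

/-- Every probability distribution on `{0,1}^n` whose support has cardinality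
at most `m+1` belongs to `RBM_{n,m}`. -/
theorem small_support_mem_rbm (n m : ℕ)
    (p : (Fin n → Bool) → ℝ) (hp : IsProb p)
    (hsupp : Set.ncard {v | p v ≠ 0} ≤ m + 1) :
    p ∈ RBM n m := by
  classical
  obtain ⟨v₀, -, hv₀⟩ := Finset.exists_ne_zero_of_sum_ne_zero (hp.2.symm ▸ one_ne_zero)
  set S := (Finset.univ.filter fun v => p v ≠ 0).erase v₀
  have hS : S.card ≤ m := by
    rw [Set.ncard_eq_toFinset_card', Set.toFinset_ofPred] at hsupp
    rw [Finset.card_erase_of_mem (by simpa using hv₀)]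
    omega
  obtain ⟨σ, hσsupp, hσuniq⟩ := exists_fin_option_enum_of_card_le S hS
  refine mem_closure_of_tendsto (tendsto_rbmDist hp hv₀ (σ := σ)
    (fun j x hx => by simpa [S, and_comm] using hσsupp j x hx)
    (fun x hx hpx => hσuniq x (by simp [S, hx, hpx])))
    (Eventually.of_forall fun t => ⟨_, _, _, rfl⟩)
end
end

section
/- Let ξ = {X₁, …, X_m} be a partition of X = {0,1}^n into cubical sets, each of cardinality at least 2. For each i let E_i be the independence model on X_i (product distributions supported on the face X_i), and let M be the mixture of E₁, …, E_m, i.e., the set of all Σ_i α_i p_i with p_i ∈ E_i, α_i ≥ 0, Σ_i α_i = 1. Then D_M = max_{i=1,…,m} log₂(|X_i|) - 1. -/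
open scoped BigOperators

noncomputable section

/-!
Upper bound: given `p`, give the face `Xᵢ` the weight `p(Xᵢ)` and the product distribution that
follows the marginal of `p|Xᵢ` in one free coordinate and is uniform in the others. This mixture
dominates `p` on `Xᵢ` up to the factor `|Xᵢ| / 2`, so `D(p‖q) ≤ maxᵢ log₂|Xᵢ| - 1`.

Lower bound: for antipodal vertices `u, v` of `Xᵢ`, AM-GM in each free coordinate gives
`q u * q v ≤ 4^{-dim Xᵢ} = |Xᵢ|⁻²` for every product distribution `q`. This closed condition
survives mixing (the faces are disjoint and the weights are at most `1`) and passing to the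
closure, so the uniform distribution on `{u, v}` is at divergence at least `log₂|Xᵢ| - 1` from
the model.
-/

open Finset Function Real

section Finite

variable {ι β : Type*}

def face (I : Finset ι) (u : ι → β) : Set (ι → β) := {x | ∀ j ∉ I, x j = u j}

theorem ncard_face (I : Finset ι) (u : ι → β) : (face I u).ncard = Nat.card β ^ #I := by
  classical
  let e : face I u ≃ (I → β) :=
    { toFun := fun x j => x.1 j
      invFun := fun g => ⟨fun j => if h : j ∈ I then g ⟨j, h⟩ else u j, fun j hj => dif_neg hj⟩
      left_inv := fun ⟨x, hx⟩ => by
        ext j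
        by_cases h : j ∈ I <;> simp [h, hx j]
      right_inv := fun g => by simp }
  rw [← Nat.card_coe_set_eq, Nat.card_congr e, Nat.card_fun, Nat.card_eq_finsetCard]

theorem ncard_face_bool (I : Finset ι) (u : ι → Bool) : (face I u).ncard = 2 ^ #I := by
  rw [ncard_face, Nat.card_eq_fintype_card, Fintype.card_bool]

theorem IsProb.le_one [Fintype ι] {p : ι → ℝ} (hp : IsProb p) (x : ι) : p x ≤ 1 :=
  hp.2 ▸ single_le_sum (fun y _ => hp.1 y) (mem_univ x)

theorem IsProb.mul_le_quarter {f : Bool → ℝ} (hf : IsProb f) {a b : Bool} (hab : a ≠ b) :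
    f a * f b ≤ 1 / 4 := by
  have hsum : f a + f b = 1 :=
    hf.2 ▸ (Fintype.sum_eq_add a b hab fun x hx => by
      cases x <;> cases a <;> cases b <;> simp_all).symm
  nlinarith [sq_nonneg (f a - f b)]

def prodDist [Fintype ι] (f : ι → β → ℝ) (v : ι → β) : ℝ := ∏ j, f j (v j)

theorem isProb_prodDist [Fintype ι] [DecidableEq ι] [Fintype β] {f : ι → β → ℝ}
    (hf : ∀ j, IsProb (f j)) : IsProb (prodDist f) := by
  refine ⟨fun v => prod_nonneg fun j _ => (hf j).1 _, ?_⟩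
  simp only [prodDist]
  rw [← Fintype.prod_sum, prod_congr rfl fun j _ => (hf j).2]
  simp

end Finite

section KL

variable {X : Type*} [Fintype X]

theorem klTerm_le_mul_logb {a b K : ℝ} (ha : 0 ≤ a) (hK : 0 < K) (hab : a ≤ K * b) :
    klTerm a b ≤ a * logb 2 K := by
  rcases ha.eq_or_lt with rfl | ha
  · simp [klTerm]
  have hb : 0 < b := pos_of_mul_pos_right (ha.trans_le hab) hK.le
  rw [klTerm, if_neg ha.ne']
  exact mul_le_mul_of_nonneg_left (logb_le_logb_of_le one_lt_two (div_pos ha hb)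
    (div_le_of_le_mul₀ hb.le hK.le hab)) ha.le

theorem KL_le_logb_of_le_mul {p q : X → ℝ} (hp : IsProb p) {K : ℝ} (hK : 0 < K)
    (h : ∀ x, p x ≤ K * q x) : KL p q ≤ ((logb 2 K : ℝ) : EReal) := by
  have hsupp : ∀ x, p x ≠ 0 → q x ≠ 0 := fun x hpx hqx =>
    hpx (le_antisymm (by simpa [hqx] using h x) (hp.1 x))
  rw [KL, if_pos hsupp, EReal.coe_le_coe_iff]
  calc ∑ x, klTerm (p x) (q x) ≤ ∑ x, p x * logb 2 K :=
        sum_le_sum fun x _ => klTerm_le_mul_logb (hp.1 x) hK (h x)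
    _ = logb 2 K := by rw [← sum_mul, hp.2, one_mul]

variable [DecidableEq X]

def pairDist (x y : X) (z : X) : ℝ := if z = x ∨ z = y then 1 / 2 else 0

theorem isProb_pairDist {x y : X} (hxy : x ≠ y) : IsProb (pairDist x y) := by
  refine ⟨fun z => by unfold pairDist; split_ifs <;> norm_num, ?_⟩
  rw [Fintype.sum_eq_add (f := pairDist x y) x y hxy fun z hz => if_neg (not_or.2 hz)]
  norm_num [pairDist]

theorem klTerm_half {b : ℝ} (hb : 0 < b) : klTerm (1 / 2) b = (-1 - logb 2 b) / 2 := by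
  rw [klTerm, if_neg one_half_pos.ne', logb_div one_half_pos.ne' hb.ne', one_div, logb_inv,
    logb_self_eq_one one_lt_two]
  ring

theorem le_KL_pairDist {x y : X} (hxy : x ≠ y) {q : X → ℝ} (hx : 0 ≤ q x) (hy : 0 ≤ q y)
    {N : ℝ} (h : q x * q y ≤ (N ^ 2)⁻¹) :
    ((logb 2 N - 1 : ℝ) : EReal) ≤ KL (pairDist x y) q := by
  rw [KL]
  split_ifs with hsupp
  swap
  · exact le_top
  have hx : 0 < q x := hx.lt_of_ne' (hsupp x (by simp [pairDist]))
  have hy : 0 < q y := hy.lt_of_ne' (hsupp y (by simp [pairDist]))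
  have hlog : logb 2 (q x) + logb 2 (q y) ≤ -2 * logb 2 N := by
    calc logb 2 (q x) + logb 2 (q y) = logb 2 (q x * q y) := (logb_mul hx.ne' hy.ne').symm
      _ ≤ logb 2 (N ^ 2)⁻¹ := logb_le_logb_of_le one_lt_two (mul_pos hx hy) h
      _ = -2 * logb 2 N := by rw [logb_inv, logb_pow]; push_cast; ring
  rw [EReal.coe_le_coe_iff, Fintype.sum_eq_add x y hxy fun z hz => by
    simp [pairDist, hz.1, hz.2, klTerm]]
  simp only [pairDist, true_or, or_true, if_true, klTerm_half hx, klTerm_half hy]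
  linarith

end KL

section Cube

variable {n : ℕ}

theorem IsProductDist.mul_le {r : (Fin n → Bool) → ℝ} (hr : IsProductDist r)
    (x y : Fin n → Bool) : r x * r y ≤ (1 / 4) ^ #{j | x j ≠ y j} := by
  obtain ⟨f, hf, hrf⟩ := hr
  have hf0 : ∀ j b, 0 ≤ f j b := fun j => (hf j).1
  calc r x * r y = ∏ j, f j (x j) * f j (y j) := by rw [hrf, hrf, prod_mul_distrib]
    _ ≤ ∏ j, if x j ≠ y j then 1 / 4 else 1 := by
      refine prod_le_prod (fun j _ => mul_nonneg (hf0 j _) (hf0 j _)) fun j _ => ?_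
      split_ifs with hxy
      · exact (hf j).mul_le_quarter hxy
      · exact mul_le_one₀ ((hf j).le_one _) (hf0 j _) ((hf j).le_one _)
    _ = (1 / 4) ^ #{j | x j ≠ y j} := by rw [prod_ite, prod_const, prod_const_one, mul_one]

def faceFactor (I : Finset (Fin n)) (u : Fin n → Bool) (j₀ : Fin n) (μ : Bool → ℝ)
    (j : Fin n) : Bool → ℝ :=
  if j ∈ I then (if j = j₀ then μ else fun _ => 1 / 2) else fun b => if b = u j then 1 else 0

variable {I : Finset (Fin n)} {u : Fin n → Bool} {j₀ : Fin n} {μ : Bool → ℝ}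

theorem isProb_faceFactor (hμ : IsProb μ) (j : Fin n) : IsProb (faceFactor I u j₀ μ j) := by
  unfold faceFactor
  split_ifs
  · exact hμ
  · exact ⟨fun _ => by norm_num, by norm_num⟩
  · exact ⟨fun b => by dsimp only; split_ifs <;> norm_num, by cases u j <;> simp⟩

theorem prodDist_faceFactor_of_notMem {x : Fin n → Bool} (hx : x ∉ face I u) :
    prodDist (faceFactor I u j₀ μ) x = 0 := by
  obtain ⟨j, hjI, hju⟩ : ∃ j ∉ I, x j ≠ u j := by simpa [face] using hx
  exact prod_eq_zero (mem_univ j) (by simp [faceFactor, hjI, hju])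

theorem prodDist_faceFactor_of_mem (hj₀ : j₀ ∈ I) {x : Fin n → Bool} (hx : x ∈ face I u) :
    prodDist (faceFactor I u j₀ μ) x = μ (x j₀) * (1 / 2) ^ (#I - 1) := by
  have hfree : ∀ j ∈ univ.erase j₀,
      faceFactor I u j₀ μ j (x j) = if j ∈ I then 1 / 2 else 1 := by
    intro j hj
    by_cases hjI : j ∈ I
    · simp [faceFactor, hjI, ne_of_mem_erase hj]
    · simp [faceFactor, hjI, hx j hjI]
  rw [prodDist, ← mul_prod_erase _ _ (mem_univ j₀), prod_congr rfl hfree, prod_ite_mem,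
    erase_inter, univ_inter, prod_const, card_erase_of_mem hj₀]
  simp [faceFactor, hj₀]

def indepModel (F : Set (Fin n → Bool)) : Set ((Fin n → Bool) → ℝ) :=
  {q | IsProb q ∧ IsProductDist q ∧ ∀ x ∉ F, q x = 0}

theorem prodDist_faceFactor_mem_indepModel (hμ : IsProb μ) :
    prodDist (faceFactor I u j₀ μ) ∈ indepModel (face I u) :=
  ⟨isProb_prodDist (isProb_faceFactor hμ), ⟨_, isProb_faceFactor hμ, fun _ => rfl⟩,
    fun _ hx => prodDist_faceFactor_of_notMem hx⟩

end Cube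

section Mixture

variable {n : ℕ} {ι : Type*} [Fintype ι]

def mixture {Y : Type*} (E : ι → Set (Y → ℝ)) : Set (Y → ℝ) :=
  {q | ∃ (α : ι → ℝ) (r : ι → Y → ℝ), (∀ i, 0 ≤ α i) ∧ (∑ i, α i = 1) ∧ (∀ i, r i ∈ E i) ∧
    q = fun x => ∑ i, α i * r i x}

theorem exists_mem_indepModel_le {F : Set (Fin n → Bool)} (hF : IsFace F) (hcard : 2 ≤ F.ncard)
    {w : (Fin n → Bool) → ℝ} (hw : ∀ x, 0 ≤ w x) (hwF : ∀ x ∉ F, w x = 0) :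
    ∃ r ∈ indepModel F, ∀ x, 2 * w x ≤ F.ncard * (∑ y, w y) * r x := by
  obtain ⟨I, u, rfl : F = face I u⟩ := hF
  rw [ncard_face_bool] at hcard ⊢
  push_cast
  obtain ⟨j₀, hj₀⟩ : I.Nonempty := card_pos.1 (Nat.pos_of_ne_zero fun h => by simp [h] at hcard)
  set s := ∑ y, w y
  have hs₀ : 0 ≤ s := sum_nonneg fun y _ => hw y
  rcases hs₀.eq_or_lt with hs | hs
  · refine ⟨_, prodDist_faceFactor_mem_indepModel (j₀ := j₀) (μ := fun _ => 1 / 2)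
      ⟨fun _ => by norm_num, by norm_num⟩, fun x => ?_⟩
    rw [(sum_eq_zero_iff_of_nonneg fun y _ => hw y).1 hs.symm x (mem_univ x), ← hs]
    simp
  let g : Bool → ℝ := fun b => ∑ y with y j₀ = b, w y
  have hμ : IsProb fun b => g b / s :=
    ⟨fun b => div_nonneg (sum_nonneg fun y _ => hw y) hs₀, by
      rw [← sum_div, sum_fiberwise, div_self hs.ne']⟩
  refine ⟨_, prodDist_faceFactor_mem_indepModel (j₀ := j₀) hμ, fun x => ?_⟩
  by_cases hx : x ∈ face I u
  · have hwg : w x ≤ g (x j₀) := single_le_sum (fun y _ => hw y) (by simp)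
    rw [prodDist_faceFactor_of_mem hj₀ hx]
    have h2 : (2 : ℝ) ^ #I * (1 / 2) ^ (#I - 1) = 2 := by
      rw [← Nat.sub_one_add_one (card_ne_zero_of_mem hj₀), pow_succ, Nat.add_sub_cancel,
        mul_right_comm, ← mul_pow]
      norm_num
    calc 2 * w x ≤ 2 * g (x j₀) := by linarith
      _ = 2 ^ #I * (1 / 2) ^ (#I - 1) * (s * (g (x j₀) / s)) := by
        rw [h2, mul_div_cancel₀ _ hs.ne']
      _ = 2 ^ #I * s * (g (x j₀) / s * (1 / 2) ^ (#I - 1)) := by ring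
  · rw [hwF x hx, mul_zero]
    exact mul_nonneg (by positivity) ((isProb_prodDist (isProb_faceFactor hμ)).1 x)

theorem sum_indicator_eq_of_partition {Y M : Type*} [AddCommMonoid M] {X : ι → Set Y}
    (hdisj : Pairwise (Disjoint on X)) (hcover : ∀ x, ∃ i, x ∈ X i) (f : Y → M) (x : Y) :
    ∑ i, (X i).indicator f x = f x := by
  obtain ⟨i, hi⟩ := hcover x
  rw [sum_eq_single i (fun k _ hk => Set.indicator_of_notMem
    (Set.disjoint_right.1 (hdisj hk) hi) f) (by simp), Set.indicator_of_mem hi]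

variable {X : ι → Set (Fin n → Bool)}

theorem exists_mem_mixture_indepModel_le (hface : ∀ i, IsFace (X i))
    (hcard : ∀ i, 2 ≤ (X i).ncard) (hdisj : Pairwise (Disjoint on X))
    (hcover : ∀ x, ∃ i, x ∈ X i) {p : (Fin n → Bool) → ℝ} (hp : IsProb p) :
    ∃ q ∈ mixture fun i => indepModel (X i), ∀ i, ∀ x ∈ X i, 2 * p x ≤ (X i).ncard * q x := by
  have hw : ∀ i x, 0 ≤ (X i).indicator p x := fun i => Set.indicator_nonneg fun x _ => hp.1 x
  choose r hr hpr using fun i => exists_mem_indepModel_le (hface i) (hcard i) (hw i)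
    fun x hx => Set.indicator_of_notMem hx p
  set α : ι → ℝ := fun i => ∑ y, (X i).indicator p y
  have hα : ∀ i, 0 ≤ α i := fun i => sum_nonneg fun y _ => hw i y
  have hα1 : ∑ i, α i = 1 := by
    simp only [α]
    rw [sum_comm, ← hp.2]
    exact sum_congr rfl fun x _ => sum_indicator_eq_of_partition hdisj hcover p x
  refine ⟨fun x => ∑ i, α i * r i x, ⟨α, r, hα, hα1, hr, rfl⟩, fun i x hx => ?_⟩
  calc 2 * p x = 2 * (X i).indicator p x := by rw [Set.indicator_of_mem hx]
    _ ≤ (X i).ncard * α i * r i x := hpr i x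
    _ ≤ (X i).ncard * ∑ k, α k * r k x := by
      rw [mul_assoc]
      gcongr
      exact single_le_sum (f := fun k => α k * r k x)
        (fun k _ => mul_nonneg (hα k) ((hr k).1.1 x)) (mem_univ i)

theorem closure_mixture_indepModel_subset (hdisj : Pairwise (Disjoint on X)) {i : ι}
    {x y : Fin n → Bool} (hx : x ∈ X i) (hy : y ∈ X i) :
    closure (mixture fun i => indepModel (X i)) ⊆
      {q | 0 ≤ q x ∧ 0 ≤ q y ∧ q x * q y ≤ (1 / 4) ^ #{j | x j ≠ y j}} := by
  refine closure_minimal ?_ ((isClosed_le continuous_const (continuous_apply x)).inter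
    ((isClosed_le continuous_const (continuous_apply y)).inter
      (isClosed_le ((continuous_apply x).mul (continuous_apply y)) continuous_const)))
  rintro _ ⟨α, r, hα, hα1, hr, rfl⟩
  have hval : ∀ z ∈ X i, ∑ k, α k * r k z = α i * r i z := fun z hz =>
    sum_eq_single i (fun k _ hk => by
      rw [(hr k).2.2 z (Set.disjoint_right.1 (hdisj hk) hz), mul_zero]) (by simp)
  have hαi : α i ≤ 1 := hα1 ▸ single_le_sum (fun k _ => hα k) (mem_univ i)
  have hr0 : ∀ z, 0 ≤ r i z := (hr i).1.1
  simp only [Set.mem_ofPred_eq, hval x hx, hval y hy]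
  refine ⟨mul_nonneg (hα i) (hr0 x), mul_nonneg (hα i) (hr0 y), ?_⟩
  calc α i * r i x * (α i * r i y) = α i ^ 2 * (r i x * r i y) := by ring
    _ ≤ 1 * (r i x * r i y) := by
      gcongr
      · exact mul_nonneg (hr0 x) (hr0 y)
      · exact pow_le_one₀ (hα i) hαi
    _ ≤ (1 / 4) ^ #{j | x j ≠ y j} := by rw [one_mul]; exact (hr i).2.1.mul_le x y

end Mixture

section Bounds

variable {n : ℕ} {ι : Type*} [Fintype ι] {X : ι → Set (Fin n → Bool)}

theorem KLset_closure_mixture_indepModel_le (hface : ∀ i, IsFace (X i))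
    (hcard : ∀ i, 2 ≤ (X i).ncard) (hdisj : Pairwise (Disjoint on X))
    (hcover : ∀ x, ∃ i, x ∈ X i) {p : (Fin n → Bool) → ℝ} (hp : IsProb p) :
    KLset p (closure (mixture fun i => indepModel (X i))) ≤
      ⨆ i, ((logb 2 (X i).ncard - 1 : ℝ) : EReal) := by
  have : Nonempty ι := ⟨(hcover fun _ => false).choose⟩
  obtain ⟨imax, hmax⟩ := Finite.exists_max fun i => (X i).ncard
  obtain ⟨q, hqM, hpq⟩ := exists_mem_mixture_indepModel_le hface hcard hdisj hcover hp
  have hpos : ∀ i, (0 : ℝ) < (X i).ncard := fun i => by have := hcard i; positivity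
  have hdom : ∀ x, p x ≤ (X imax).ncard / 2 * q x := fun x => by
    obtain ⟨i, hi⟩ := hcover x
    have hpqx := hpq i x hi
    have hq : 0 ≤ q x := nonneg_of_mul_nonneg_right (by linarith [hp.1 x]) (hpos i)
    have hle : ((X i).ncard : ℝ) ≤ (X imax).ncard := by exact_mod_cast hmax i
    nlinarith
  calc KLset p (closure _) ≤ KL p q := iInf₂_le q (subset_closure hqM)
    _ ≤ ((logb 2 ((X imax).ncard / 2) : ℝ) : EReal) :=
      KL_le_logb_of_le_mul hp (half_pos (hpos imax)) hdom
    _ = ((logb 2 (X imax).ncard - 1 : ℝ) : EReal) := by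
      rw [logb_div (hpos imax).ne' two_ne_zero, logb_self_eq_one one_lt_two]
    _ ≤ _ := le_iSup (fun i => ((logb 2 (X i).ncard - 1 : ℝ) : EReal)) imax

theorem le_iSup_KLset_closure_mixture_indepModel (hface : ∀ i, IsFace (X i))
    (hcard : ∀ i, 2 ≤ (X i).ncard) (hdisj : Pairwise (Disjoint on X)) (i : ι) :
    ((logb 2 (X i).ncard - 1 : ℝ) : EReal) ≤
      ⨆ p ∈ {p : (Fin n → Bool) → ℝ | IsProb p},
        KLset p (closure (mixture fun i => indepModel (X i))) := by
  obtain ⟨I, u, hXi : X i = face I u⟩ := hface i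
  set v : Fin n → Bool := fun j => if j ∈ I then !u j else u j
  have hu : u ∈ X i := hXi ▸ fun j _ => rfl
  have hv : v ∈ X i := hXi ▸ fun j hj => if_neg hj
  have hdiff : #{j | u j ≠ v j} = #I := by
    congr 1
    ext j
    by_cases hj : j ∈ I <;> simp [v, hj]
  have hN : (X i).ncard = 2 ^ #I := hXi ▸ ncard_face_bool I u
  have huv : u ≠ v := fun h => by
    have := hcard i
    simp [hN, ← hdiff, h] at this
  refine le_iSup₂_of_le (pairDist u v) (isProb_pairDist huv) (le_iInf₂ fun q hq => ?_)
  obtain ⟨hqu, hqv, hquv⟩ := closure_mixture_indepModel_subset hdisj hu hv hq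
  refine le_KL_pairDist huv hqu hqv (hquv.trans_eq ?_)
  rw [hdiff, hN]
  push_cast
  rw [← pow_mul, mul_comm, pow_mul, one_div, ← inv_pow]
  norm_num

end Bounds

/-- (Corollary 2 of the paper.) Let `ξ = {X₁,…,X_m}` be a partition of
`{0,1}^n` into cubical sets of cardinality at least 2, let `E i` be the independence model on
`X i` (product distributions supported on the face `X i`), and let `M` be their mixture. Then
`D_M = max_i log₂|Xᵢ| - 1`. -/
theorem max_kl_mixture_of_products_on_cubical_partition (n m : ℕ)
    (X : Fin m → Set (Fin n → Bool)) (hface : ∀ i, IsFace (X i))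
    (hcard : ∀ i, 2 ≤ (X i).ncard)
    (hdisj : ∀ i j, i ≠ j → Disjoint (X i) (X j))
    (hcover : ∀ v, ∃ i, v ∈ X i)
    (E : Fin m → Set ((Fin n → Bool) → ℝ))
    (hE : ∀ i, E i = {q | IsProb q ∧ IsProductDist q ∧ ∀ x ∉ X i, q x = 0})
    (M : Set ((Fin n → Bool) → ℝ))
    (hMdef : M = {q | ∃ (α : Fin m → ℝ) (r : Fin m → (Fin n → Bool) → ℝ),
        (∀ i, 0 ≤ α i) ∧ (∑ i, α i = 1) ∧ (∀ i, r i ∈ E i) ∧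
        q = fun x => ∑ i, α i * r i x}) :
    (⨆ p ∈ {p : (Fin n → Bool) → ℝ | IsProb p}, KLset p (closure M)) =
      ⨆ i, ((Real.logb 2 ((X i).ncard) - 1 : ℝ) : EReal) := by
  obtain rfl : E = fun i => indepModel (X i) := funext hE
  subst hMdef
  exact le_antisymm
    (iSup₂_le fun p hp => KLset_closure_mixture_indepModel_le hface hcard hdisj hcover hp)
    (iSup_le (le_iSup_KLset_closure_mixture_indepModel hface hcard hdisj))
end
end
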